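/- Identifiability up to permutation of a two-component binomial mixture: if Σ_{k=1}^2 w_k Bin(N, θ_k)(y) = Σ_{k=1}^2 w'_k Bin(N, θ'_k)(y) for all y ∈ {0,…,N}, with w_k, w'_k > 0, w_1 + w_2 = w'_1 + w'_2 = 1, θ_1 ≠ θ_2, θ'_1 ≠ θ'_2, θ_k, θ'_k ∈ (0,1), and N ≥ 3, then there is a permutation σ of {1,2} with (w_k, θ_k) = (w'_{σ(k)}, θ'_{σ(k)}) for k = 1,2. -/
import Mathlib


open Finset

/-- Binomial(N, θ) probability mass function at y ∈ {0,…,N}. -/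
noncomputable def binPMF (N : ℕ) (θ : ℝ) (y : Fin (N + 1)) : ℝ :=
  (N.choose (y : ℕ) : ℝ) * θ ^ (y : ℕ) * (1 - θ) ^ (N - (y : ℕ))

open Polynomial in
/-- Generating-function identity for the binomial PMF. -/
lemma binPMF_genfun_eval (N : ℕ) (θ t : ℝ) :
    ∑ y : Fin (N+1), binPMF N θ y * (1+t)^(y:ℕ) = (1 + θ*t)^N := by
  have h : (1 + θ*t) = (θ*(1+t)) + (1-θ) := by ring
  rw [h, add_pow]
  simp only [binPMF]
  rw [Fin.sum_univ_eq_sum_range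
    (fun i => (N.choose i : ℝ) * θ^i * (1-θ)^(N-i) * (1+t)^i)]
  refine Finset.sum_congr rfl fun i hi => ?_
  rw [mul_pow]; ring

open Polynomial in
lemma coeff_linear_pow (N j : ℕ) (hj : j ≤ N) (θ : ℝ) :
    ((Polynomial.C θ * Polynomial.X + 1)^N).coeff j = θ^j * N.choose j := by
  rw [add_pow, Polynomial.finset_sum_coeff]
  have h1 : ∀ i ∈ Finset.range (N+1),
      ((C θ * X)^i * 1^(N-i) * ((N.choose i : ℕ) : ℝ[X])).coeff j
      = if i = j then θ^j * N.choose j else 0 := by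
    intro i hi
    rw [mul_pow, one_pow, mul_one, ← Polynomial.C_pow, ← Polynomial.C_eq_natCast,
      mul_right_comm, ← Polynomial.C_mul, Polynomial.coeff_C_mul, Polynomial.coeff_X_pow]
    by_cases h : i = j
    · subst h; simp
    · simp [h, Ne.symm h]
  rw [Finset.sum_congr rfl h1, Finset.sum_ite_eq' (Finset.range (N+1)) j]
  simp [Nat.lt_succ_of_le hj, Nat.lt_succ_iff.mpr hj]

open Polynomial in
/-- Equality of mixtures implies equality of power-sum moments. -/
lemma mixture_moments_eq (N : ℕ) (w w' θ θ' : Fin 2 → ℝ)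
    (heq : ∀ y : Fin (N + 1),
      ∑ k, w k * binPMF N (θ k) y = ∑ k, w' k * binPMF N (θ' k) y)
    (j : ℕ) (hj : j ≤ N) :
    w 0 * θ 0 ^ j + w 1 * θ 1 ^ j = w' 0 * θ' 0 ^ j + w' 1 * θ' 1 ^ j := by
  set Q : ℝ[X] := C (w 0) * (C (θ 0) * X + 1)^N + C (w 1) * (C (θ 1) * X + 1)^N
      - (C (w' 0) * (C (θ' 0) * X + 1)^N + C (w' 1) * (C (θ' 1) * X + 1)^N) with hQ
  have hQ0 : Q = 0 := by
    apply Polynomial.funext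
    intro t
    have key : ∀ (v : Fin 2 → ℝ) (ψ : Fin 2 → ℝ),
        v 0 * (1 + ψ 0 * t)^N + v 1 * (1 + ψ 1 * t)^N
        = ∑ y : Fin (N+1), (∑ k, v k * binPMF N (ψ k) y) * (1+t)^(y:ℕ) := by
      intro v ψ
      rw [← binPMF_genfun_eval N (ψ 0) t, ← binPMF_genfun_eval N (ψ 1) t,
        Finset.mul_sum, Finset.mul_sum, ← Finset.sum_add_distrib]
      refine Finset.sum_congr rfl fun y _ => ?_
      rw [Fin.sum_univ_two]; ring
    have h1 := key w θ
    have h2 := key w' θ'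
    simp only [heq] at h1
    simp only [hQ, Polynomial.eval_sub, Polynomial.eval_add, Polynomial.eval_mul,
      Polynomial.eval_pow, Polynomial.eval_C, Polynomial.eval_X, Polynomial.eval_one,
      Polynomial.eval_zero]
    linear_combination h1 - h2
  have hc : Q.coeff j = 0 := by rw [hQ0]; simp
  simp only [hQ, Polynomial.coeff_sub, Polynomial.coeff_add, Polynomial.coeff_C_mul,
    coeff_linear_pow N j hj] at hc
  have hch : (0:ℝ) < N.choose j := by exact_mod_cast Nat.choose_pos hj
  have := sub_eq_zero.mp hc
  nlinarith [this, hch]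

/-- The two-atom moment problem: moments up to order 3 determine a
two-point measure with distinct atoms. -/
lemma two_atom_moment_problem (a b c d u v u' v' : ℝ)
    (hu : 0 < u) (hv : 0 < v)
    (hw1 : u + v = 1) (hw1' : u' + v' = 1)
    (hab : a ≠ b) (hcd : c ≠ d)
    (hm1 : u*a + v*b = u'*c + v'*d)
    (hm2 : u*a^2 + v*b^2 = u'*c^2 + v'*d^2)
    (hm3 : u*a^3 + v*b^3 = u'*c^3 + v'*d^3) :
    (c = a ∧ d = b ∧ u' = u ∧ v' = v) ∨ (c = b ∧ d = a ∧ u' = v ∧ v' = u) := by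
  have P1 : (c+d-(a+b))*(u*a+v*b) = c*d - a*b := by
    linear_combination (c+d)*hm1 - hm2 + c*d*hw1' - a*b*hw1
  have P2 : (c+d-(a+b))*(u*a^2+v*b^2) = (c*d-a*b)*(u*a+v*b) := by
    linear_combination (c+d)*hm2 - hm3 - c*d*hm1
  have hvar : u*a^2+v*b^2 - (u*a+v*b)^2 = u*v*(a-b)^2 := by
    linear_combination (-(u*a^2) - v*b^2)*hw1
  have hkey : (c+d-(a+b)) * (u*v*(a-b)^2) = 0 := by
    linear_combination P2 - (u*a+v*b)*P1 - (c+d-(a+b))*hvar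
  have hab0 : a - b ≠ 0 := sub_ne_zero.mpr hab
  have hpos : 0 < u*v*(a-b)^2 := by positivity
  have hs : c + d = a + b := by
    rcases mul_eq_zero.mp hkey with h | h
    · linarith
    · linarith
  have hp : c*d = a*b := by linear_combination -P1 + (u*a+v*b)*hs
  have hc : (c - a) * (c - b) = 0 := by linear_combination c*hs - hp
  have hd : (d - a) * (d - b) = 0 := by linear_combination d*hs - hp
  rcases mul_eq_zero.mp hc with h1 | h1
  · have hca : c = a := by linarith
    have hdb : d = b := by
      rcases mul_eq_zero.mp hd with h2 | h2
      · exfalso; apply hcd; linarith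
      · linarith
    have huu : u' = u := by
      have h3 : (u - u')*(a - b) = 0 := by
        linear_combination hm1 + u'*hca + v'*hdb - b*hw1 + b*hw1'
      rcases mul_eq_zero.mp h3 with h | h
      · linarith
      · exact absurd (by linarith : a = b) hab
    exact Or.inl ⟨hca, hdb, huu, by linarith⟩
  · have hcb : c = b := by linarith
    have hda : d = a := by
      rcases mul_eq_zero.mp hd with h2 | h2
      · linarith
      · exfalso; apply hcd; linarith
    have huv : u' = v := by
      have h3 : (v - u')*(b - a) = 0 := by
        linear_combination hm1 + u'*hcb + v'*hda - a*hw1 + a*hw1'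
      rcases mul_eq_zero.mp h3 with h | h
      · linarith
      · exact absurd (by linarith : a = b) hab
    exact Or.inr ⟨hcb, hda, huv, by linarith⟩

/-- Identifiability up to permutation of a two-component binomial mixture
(Teicher): if two 2-component mixtures of Binomial(N, ·) laws with positive
weights summing to one, success probabilities in (0,1) and distinct
components agree on all of {0,…,N} with N ≥ 3, then the parameters agree up
to a permutation of the labels. -/
theorem two_component_binomial_mixture_identifiable
    (N : ℕ) (hN : 3 ≤ N)
    (w w' θ θ' : Fin 2 → ℝ)
    (hw : ∀ k, 0 < w k) (hw' : ∀ k, 0 < w' k)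
    (hw1 : w 0 + w 1 = 1) (hw1' : w' 0 + w' 1 = 1)
    (hθ : ∀ k, θ k ∈ Set.Ioo (0 : ℝ) 1) (hθ' : ∀ k, θ' k ∈ Set.Ioo (0 : ℝ) 1)
    (hθne : θ 0 ≠ θ 1) (hθne' : θ' 0 ≠ θ' 1)
    (heq : ∀ y : Fin (N + 1),
      ∑ k, w k * binPMF N (θ k) y = ∑ k, w' k * binPMF N (θ' k) y) :
    ∃ σ : Equiv.Perm (Fin 2), ∀ k, w k = w' (σ k) ∧ θ k = θ' (σ k) := by
  have hm1 : w 0 * θ 0 + w 1 * θ 1 = w' 0 * θ' 0 + w' 1 * θ' 1 := by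
    have := mixture_moments_eq N w w' θ θ' heq 1 (by omega)
    simpa using this
  have hm2 := mixture_moments_eq N w w' θ θ' heq 2 (by omega)
  have hm3 := mixture_moments_eq N w w' θ θ' heq 3 (by omega)
  rcases two_atom_moment_problem (θ 0) (θ 1) (θ' 0) (θ' 1) (w 0) (w 1) (w' 0) (w' 1)
      (hw 0) (hw 1) hw1 hw1' hθne hθne' hm1 hm2 hm3 with
    ⟨h1, h2, h3, h4⟩ | ⟨h1, h2, h3, h4⟩
  · refine ⟨Equiv.refl _, fun k => ?_⟩
    fin_cases k
    · exact ⟨h3.symm, h1.symm⟩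
    · exact ⟨h4.symm, h2.symm⟩
  · refine ⟨Equiv.swap 0 1, fun k => ?_⟩
    fin_cases k
    · simpa using ⟨h4.symm, h2.symm⟩
    · simpa using ⟨h3.symm, h1.symm⟩
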